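/- arXiv:1409.7565 — 2 statements merged into one kernel-verified Lean document; each statement's English description precedes it below -/
import Mathlib

section
/- Let X, Y, X0, Y0 be quasi-Banach spaces, 0<θ<1, and suppose Y0∩Y1 ↪ Y with a constant C>0 such that ‖y‖_Y ≤ C·‖y‖_{Y0}^{1-θ}·‖y‖_{Y1}^{θ} for all y ∈ Y0∩Y1. If T is a bounded linear operator from X into Y0, into Y1, and into Y, then the Gelfand numbers satisfy c_{n+m-1}(T : X→Y) ≤ C · c_n(T : X→Y0)^{1-θ} · c_m(T : X→Y1)^{θ} for all n,m ∈ ℕ. -/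
/-!
Given subspaces `M₀, M₁` of codimension `< n` and `< m` that almost realise `c_n(T₀)` and
`c_m(T₁)`, the intersection `M₀ ⊓ M₁` has codimension `< n + m - 1`, and on it the pointwise
interpolation inequality `‖T x‖ ≤ C ‖T₀ x‖^(1-θ) ‖T₁ x‖^θ` bounds `‖T x‖` by
`C (c_n(T₀) + ε)^(1-θ) (c_m(T₁) + ε)^θ`; letting `ε → 0` gives the claim.
-/

/-- The `n`-th Gelfand number of a continuous linear operator `T : X → Y`:
`c_n(T) = inf` over subspaces `M ⊆ X` with `codim M < n` of
`sup {‖T x‖ : x ∈ M, ‖x‖ ≤ 1}`. -/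
noncomputable def gelfandNum {X Y : Type*} [NormedAddCommGroup X] [NormedSpace ℂ X]
    [NormedAddCommGroup Y] [NormedSpace ℂ Y] (T : X →L[ℂ] Y) (n : ℕ) : ℝ :=
  sInf {r : ℝ | ∃ M : Submodule ℂ X, Module.rank ℂ (X ⧸ M) < (n : Cardinal) ∧
    r = sSup {s : ℝ | ∃ x ∈ M, ‖x‖ ≤ 1 ∧ s = ‖T x‖}}

noncomputable def supNormOn {X Y : Type*} [NormedAddCommGroup X] [NormedSpace ℂ X]
    [NormedAddCommGroup Y] [NormedSpace ℂ Y] (T : X →L[ℂ] Y) (M : Submodule ℂ X) : ℝ :=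
  sSup {s : ℝ | ∃ x ∈ M, ‖x‖ ≤ 1 ∧ s = ‖T x‖}

theorem Cardinal.add_lt_natCast_add_sub_one {a b : Cardinal} {n m : ℕ}
    (ha : a < n) (hb : b < m) : a + b < ((n + m - 1 : ℕ) : Cardinal) := by
  obtain ⟨k, rfl⟩ := Cardinal.lt_aleph0.1 (ha.trans Cardinal.natCast_lt_aleph0)
  obtain ⟨l, rfl⟩ := Cardinal.lt_aleph0.1 (hb.trans Cardinal.natCast_lt_aleph0)
  rw [Nat.cast_lt] at ha hb
  exact_mod_cast (by omega : k + l < n + m - 1)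

theorem Submodule.rank_quotient_inf_le {K V : Type*} [DivisionRing K] [AddCommGroup V]
    [Module K V] (M₀ M₁ : Submodule K V) :
    Module.rank K (V ⧸ (M₀ ⊓ M₁)) ≤ Module.rank K (V ⧸ M₀) + Module.rank K (V ⧸ M₁) := by
  have hker : LinearMap.ker (M₀.mkQ.prod M₁.mkQ) = M₀ ⊓ M₁ := by
    rw [LinearMap.ker_prod, Submodule.ker_mkQ, Submodule.ker_mkQ]
  calc Module.rank K (V ⧸ (M₀ ⊓ M₁))
      = Module.rank K (LinearMap.range (M₀.mkQ.prod M₁.mkQ)) := by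
        rw [← hker]; exact (LinearMap.quotKerEquivRange _).rank_eq
    _ ≤ Module.rank K ((V ⧸ M₀) × (V ⧸ M₁)) := Submodule.rank_le _
    _ = _ := rank_prod'

theorem le_mul_rpow_mul_rpow_of_forall_pos {c C a b p q : ℝ} (hp : 0 ≤ p) (hq : 0 ≤ q)
    (h : ∀ ε > 0, c ≤ C * (a + ε) ^ p * (b + ε) ^ q) : c ≤ C * a ^ p * b ^ q := by
  have hcont : ContinuousAt (fun ε : ℝ => C * (a + ε) ^ p * (b + ε) ^ q) 0 :=
    (continuousAt_const.mul
      ((continuousAt_const.add continuousAt_id).rpow_const (Or.inr hp))).mul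
      ((continuousAt_const.add continuousAt_id).rpow_const (Or.inr hq))
  have hlim := (hcont.continuousWithinAt (s := Set.Ioi 0)).tendsto
  simp only [add_zero] at hlim
  exact ge_of_tendsto hlim (eventually_mem_nhdsWithin.mono h)

section GelfandNumbers

variable {X Y : Type*} [NormedAddCommGroup X] [NormedSpace ℂ X]
  [NormedAddCommGroup Y] [NormedSpace ℂ Y]

lemma bddAbove_supNormOn_set (T : X →L[ℂ] Y) (M : Submodule ℂ X) :
    BddAbove {s : ℝ | ∃ x ∈ M, ‖x‖ ≤ 1 ∧ s = ‖T x‖} :=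
  ⟨‖T‖, by rintro s ⟨x, -, hx, rfl⟩; exact T.unit_le_opNorm x hx⟩

lemma norm_apply_le_supNormOn (T : X →L[ℂ] Y) {M : Submodule ℂ X} {x : X}
    (hx : x ∈ M) (hx1 : ‖x‖ ≤ 1) : ‖T x‖ ≤ supNormOn T M :=
  le_csSup (bddAbove_supNormOn_set T M) ⟨x, hx, hx1, rfl⟩

lemma supNormOn_nonneg (T : X →L[ℂ] Y) (M : Submodule ℂ X) : 0 ≤ supNormOn T M :=
  (norm_nonneg _).trans (norm_apply_le_supNormOn T M.zero_mem (by simp))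

lemma supNormOn_le {T : X →L[ℂ] Y} {M : Submodule ℂ X} {r : ℝ}
    (h : ∀ x ∈ M, ‖x‖ ≤ 1 → ‖T x‖ ≤ r) : supNormOn T M ≤ r :=
  csSup_le ⟨0, 0, M.zero_mem, by simp⟩ (by rintro s ⟨x, hx, hx1, rfl⟩; exact h x hx hx1)

lemma gelfandNum_nonneg (T : X →L[ℂ] Y) (n : ℕ) : 0 ≤ gelfandNum T n :=
  Real.sInf_nonneg (by rintro r ⟨M, -, rfl⟩; exact supNormOn_nonneg T M)

lemma gelfandNum_le_supNormOn (T : X →L[ℂ] Y) {n : ℕ} {M : Submodule ℂ X}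
    (hM : Module.rank ℂ (X ⧸ M) < n) : gelfandNum T n ≤ supNormOn T M :=
  csInf_le ⟨0, by rintro r ⟨M, -, rfl⟩; exact supNormOn_nonneg T M⟩ ⟨M, hM, rfl⟩

lemma exists_supNormOn_lt_gelfandNum_add (T : X →L[ℂ] Y) {n : ℕ} (hn : 1 ≤ n) {ε : ℝ}
    (hε : 0 < ε) :
    ∃ M : Submodule ℂ X, Module.rank ℂ (X ⧸ M) < n ∧ supNormOn T M < gelfandNum T n + ε := by
  have hne : {r : ℝ | ∃ M : Submodule ℂ X, Module.rank ℂ (X ⧸ M) < n ∧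
      r = supNormOn T M}.Nonempty := by
    refine ⟨_, ⊤, ?_, rfl⟩
    rw [rank_subsingleton' (R := ℂ) (M := X ⧸ (⊤ : Submodule ℂ X))]
    exact_mod_cast hn
  obtain ⟨_, ⟨M, hM, rfl⟩, hlt⟩ := Real.lt_sInf_add_pos hne hε
  exact ⟨M, hM, hlt⟩

variable {Y₀ Y₁ : Type*} [NormedAddCommGroup Y₀] [NormedSpace ℂ Y₀]
  [NormedAddCommGroup Y₁] [NormedSpace ℂ Y₁]

lemma supNormOn_inf_le {θ C : ℝ} (hθ0 : 0 ≤ θ) (hθ1 : θ ≤ 1) (hC : 0 ≤ C)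
    {T : X →L[ℂ] Y} {T₀ : X →L[ℂ] Y₀} {T₁ : X →L[ℂ] Y₁}
    (hT : ∀ x, ‖T x‖ ≤ C * ‖T₀ x‖ ^ (1 - θ) * ‖T₁ x‖ ^ θ) (M₀ M₁ : Submodule ℂ X) :
    supNormOn T (M₀ ⊓ M₁) ≤ C * supNormOn T₀ M₀ ^ (1 - θ) * supNormOn T₁ M₁ ^ θ := by
  refine supNormOn_le fun x hx hx1 ↦ (hT x).trans ?_
  have h₀ := norm_apply_le_supNormOn T₀ (Submodule.mem_inf.1 hx).1 hx1
  have h₁ := norm_apply_le_supNormOn T₁ (Submodule.mem_inf.1 hx).2 hx1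
  gcongr
  exact mul_nonneg hC (Real.rpow_nonneg (supNormOn_nonneg T₀ M₀) _)

theorem gelfandNum_add_sub_one_le {θ C : ℝ} (hθ0 : 0 ≤ θ) (hθ1 : θ ≤ 1) (hC : 0 ≤ C)
    {T : X →L[ℂ] Y} {T₀ : X →L[ℂ] Y₀} {T₁ : X →L[ℂ] Y₁}
    (hT : ∀ x, ‖T x‖ ≤ C * ‖T₀ x‖ ^ (1 - θ) * ‖T₁ x‖ ^ θ) {n m : ℕ} (hn : 1 ≤ n) (hm : 1 ≤ m) :
    gelfandNum T (n + m - 1) ≤ C * gelfandNum T₀ n ^ (1 - θ) * gelfandNum T₁ m ^ θ := by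
  refine le_mul_rpow_mul_rpow_of_forall_pos (by linarith) hθ0 fun ε hε ↦ ?_
  obtain ⟨M₀, hM₀, hlt₀⟩ := exists_supNormOn_lt_gelfandNum_add T₀ hn hε
  obtain ⟨M₁, hM₁, hlt₁⟩ := exists_supNormOn_lt_gelfandNum_add T₁ hm hε
  have hcodim : Module.rank ℂ (X ⧸ (M₀ ⊓ M₁)) < (n + m - 1 : ℕ) :=
    (Submodule.rank_quotient_inf_le M₀ M₁).trans_lt
      (Cardinal.add_lt_natCast_add_sub_one hM₀ hM₁)
  calc gelfandNum T (n + m - 1)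
      ≤ supNormOn T (M₀ ⊓ M₁) := gelfandNum_le_supNormOn T hcodim
    _ ≤ C * supNormOn T₀ M₀ ^ (1 - θ) * supNormOn T₁ M₁ ^ θ :=
        supNormOn_inf_le hθ0 hθ1 hC hT M₀ M₁
    _ ≤ C * (gelfandNum T₀ n + ε) ^ (1 - θ) * (gelfandNum T₁ m + ε) ^ θ := by
        have := supNormOn_nonneg T₀ M₀
        have := supNormOn_nonneg T₁ M₁
        have ha := add_nonneg (gelfandNum_nonneg T₀ n) hε.le
        have := mul_nonneg hC (Real.rpow_nonneg ha (1 - θ))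
        gcongr

end GelfandNumbers

theorem gelfand_interpolation_general
    {X Y Y₀ Y₁ : Type*}
    [NormedAddCommGroup X] [NormedSpace ℂ X]
    [NormedAddCommGroup Y] [NormedSpace ℂ Y]
    [NormedAddCommGroup Y₀] [NormedSpace ℂ Y₀]
    [NormedAddCommGroup Y₁] [NormedSpace ℂ Y₁]
    (θ C : ℝ) (hθ0 : 0 < θ) (hθ1 : θ < 1) (hC : 0 < C)
    (j₀ : Y₀ →ₗ[ℂ] Y) (j₁ : Y₁ →ₗ[ℂ] Y)
    (hint : ∀ (y₀ : Y₀) (y₁ : Y₁), j₀ y₀ = j₁ y₁ →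
      ‖j₀ y₀‖ ≤ C * ‖y₀‖ ^ (1 - θ) * ‖y₁‖ ^ θ)
    (T : X →L[ℂ] Y) (T₀ : X →L[ℂ] Y₀) (T₁ : X →L[ℂ] Y₁)
    (hT₀ : ∀ x, j₀ (T₀ x) = T x) (hT₁ : ∀ x, j₁ (T₁ x) = T x)
    (n m : ℕ) (hn : 1 ≤ n) (hm : 1 ≤ m) :
    gelfandNum T (n + m - 1) ≤
      C * gelfandNum T₀ n ^ (1 - θ) * gelfandNum T₁ m ^ θ := by
  have hT : ∀ x, ‖T x‖ ≤ C * ‖T₀ x‖ ^ (1 - θ) * ‖T₁ x‖ ^ θ := fun x ↦ by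
    simpa only [hT₀] using hint (T₀ x) (T₁ x) ((hT₀ x).trans (hT₁ x).symm)
  exact gelfandNum_add_sub_one_le hθ0.le hθ1.le hC.le hT hn hm

/-- Interpolation property of Gelfand numbers: if `T` maps `X` into `Y₀`, `Y₁` and `Y`,
where `Y₀ ∩ Y₁ ↪ Y` (realized via injections `j₀ : Y₀ → Y`, `j₁ : Y₁ → Y`) with
`‖y‖_Y ≤ C ‖y‖_{Y₀}^{1-θ} ‖y‖_{Y₁}^{θ}` for all `y ∈ Y₀ ∩ Y₁`, then
`c_{n+m-1}(T : X → Y) ≤ C · c_n(T : X → Y₀)^{1-θ} · c_m(T : X → Y₁)^{θ}`. -/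
theorem gelfand_interpolation
    {X Y Y₀ Y₁ : Type*}
    [NormedAddCommGroup X] [NormedSpace ℂ X]
    [NormedAddCommGroup Y] [NormedSpace ℂ Y]
    [NormedAddCommGroup Y₀] [NormedSpace ℂ Y₀]
    [NormedAddCommGroup Y₁] [NormedSpace ℂ Y₁]
    (θ C : ℝ) (hθ0 : 0 < θ) (hθ1 : θ < 1) (hC : 0 < C)
    (j₀ : Y₀ →ₗ[ℂ] Y) (j₁ : Y₁ →ₗ[ℂ] Y)
    (hj₀ : Function.Injective j₀) (hj₁ : Function.Injective j₁)
    (hint : ∀ (y₀ : Y₀) (y₁ : Y₁), j₀ y₀ = j₁ y₁ →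
      ‖j₀ y₀‖ ≤ C * ‖y₀‖ ^ (1 - θ) * ‖y₁‖ ^ θ)
    (T : X →L[ℂ] Y) (T₀ : X →L[ℂ] Y₀) (T₁ : X →L[ℂ] Y₁)
    (hT₀ : ∀ x, j₀ (T₀ x) = T x) (hT₁ : ∀ x, j₁ (T₁ x) = T x)
    (n m : ℕ) (hn : 1 ≤ n) (hm : 1 ≤ m) :
    gelfandNum T (n + m - 1) ≤
      C * gelfandNum T₀ n ^ (1 - θ) * gelfandNum T₁ m ^ θ :=
  gelfand_interpolation_general θ C hθ0 hθ1 hC j₀ j₁ hint T T₀ T₁ hT₀ hT₁ n m hn hm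
end

section
/- Let X, Y, Y0, Y1 be quasi-Banach spaces, 0<θ<1, and suppose Y0∩Y1 ↪ Y with a constant C>0 such that ‖y‖_Y ≤ C·‖y‖_{Y0}^{1-θ}·‖y‖_{Y1}^{θ} for all y ∈ Y0∩Y1. If T is bounded from X into Y0, into Y1 and into Y, then the Weyl numbers satisfy x_{n+m-1}(T : X→Y) ≤ C · x_n(T : X→Y0)^{1-θ} · x_m(T : X→Y1)^{θ} for all n,m ∈ ℕ. -/
open scoped ENNReal

instance : Fact ((1 : ℝ≥0∞) ≤ 2) := ⟨one_le_two⟩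

/-- The sequence space `ℓ₂` of square-summable complex sequences. -/
noncomputable abbrev ellTwo : Type := lp (fun _ : ℕ => ℂ) 2

/-- The `n`-th approximation number:
`a_n(T) = inf {‖T - F‖ : rank F < n}`. -/
noncomputable def approxNum {E F : Type*} [NormedAddCommGroup E] [NormedSpace ℂ E]
    [NormedAddCommGroup F] [NormedSpace ℂ F] (T : E →L[ℂ] F) (n : ℕ) : ℝ :=
  sInf {r : ℝ | ∃ G : E →L[ℂ] F,
    Module.rank ℂ (LinearMap.range (G : E →ₗ[ℂ] F)) < (n : Cardinal) ∧ r = ‖T - G‖}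

/-- The `n`-th Weyl number: `x_n(T) = sup {a_n(T ∘ A) : A : ℓ₂ → E, ‖A‖ ≤ 1}`. -/
noncomputable def weylNum {E F : Type*} [NormedAddCommGroup E] [NormedSpace ℂ E]
    [NormedAddCommGroup F] [NormedSpace ℂ F] (T : E →L[ℂ] F) (n : ℕ) : ℝ :=
  sSup {r : ℝ | ∃ A : ellTwo →L[ℂ] E, ‖A‖ ≤ 1 ∧ r = approxNum (T.comp A) n}

/-!
Fix `A : ℓ₂ → X` with `‖A‖ ≤ 1` and approximants `G₀`, `G₁` of `T₀ A`, `T₁ A` of rank `< n`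
and `< m`. The closed subspace `K = ker G₀ ∩ ker G₁` has codimension at most `n + m - 2`, and on
`K` the operators `T₀ A`, `T₁ A` coincide with `T₀ A - G₀`, `T₁ A - G₁`. Since the domain is a
Hilbert space, the orthogonal projection `P` onto `K` has norm at most one, so `T A (1 - P)` has
rank `< n + m - 1` while the pointwise interpolation inequality gives
`‖T A P‖ ≤ C ‖T₀ A - G₀‖^(1-θ) ‖T₁ A - G₁‖^θ`. Taking infima over `G₀`, `G₁` and then the
supremum over `A` gives the claim.
-/

open Module LinearMap

section Interpolation

variable {𝕜 E F F₀ F₁ : Type*} [NontriviallyNormedField 𝕜]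
  [NormedAddCommGroup E] [NormedSpace 𝕜 E] [NormedAddCommGroup F] [NormedSpace 𝕜 F]
  [NormedAddCommGroup F₀] [NormedSpace 𝕜 F₀] [NormedAddCommGroup F₁] [NormedSpace 𝕜 F₁]
  {θ C : ℝ}

theorem ContinuousLinearMap.opNorm_le_mul_rpow_mul_rpow (hθ0 : 0 ≤ θ) (hθ1 : θ ≤ 1) (hC : 0 ≤ C)
    {S : E →L[𝕜] F} {S₀ : E →L[𝕜] F₀} {S₁ : E →L[𝕜] F₁}
    (hS : ∀ x, ‖S x‖ ≤ C * ‖S₀ x‖ ^ (1 - θ) * ‖S₁ x‖ ^ θ) :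
    ‖S‖ ≤ C * ‖S₀‖ ^ (1 - θ) * ‖S₁‖ ^ θ := by
  refine S.opNorm_le_bound (by positivity) fun x => ?_
  calc ‖S x‖ ≤ C * ‖S₀ x‖ ^ (1 - θ) * ‖S₁ x‖ ^ θ := hS x
    _ ≤ C * (‖S₀‖ * ‖x‖) ^ (1 - θ) * (‖S₁‖ * ‖x‖) ^ θ := by
      gcongr
      exacts [S₀.le_opNorm x, S₁.le_opNorm x]
    _ = C * ‖S₀‖ ^ (1 - θ) * ‖S₁‖ ^ θ * ‖x‖ ^ (1 - θ + θ) := by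
      rw [Real.mul_rpow (by positivity) (by positivity),
        Real.mul_rpow (by positivity) (by positivity), Real.rpow_add' (by positivity) (by simp)]
      ring
    _ = C * ‖S₀‖ ^ (1 - θ) * ‖S₁‖ ^ θ * ‖x‖ := by rw [sub_add_cancel, Real.rpow_one]

end Interpolation

theorem mul_rpow_mul_rpow_le_mul_rpow_mul_rpow {a₀ a₁ b₀ b₁ C θ : ℝ} (hθ0 : 0 ≤ θ)
    (hθ1 : θ ≤ 1) (hC : 0 ≤ C) (ha₀ : 0 ≤ a₀) (ha₁ : 0 ≤ a₁) (h₀ : a₀ ≤ b₀) (h₁ : a₁ ≤ b₁) :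
    C * a₀ ^ (1 - θ) * a₁ ^ θ ≤ C * b₀ ^ (1 - θ) * b₁ ^ θ := by
  have hb₀ : 0 ≤ b₀ := ha₀.trans h₀
  gcongr

theorem le_mul_rpow_mul_rpow_of_forall_pos_s1 {x a b C θ : ℝ} (hθ0 : 0 ≤ θ) (hθ1 : θ ≤ 1)
    (h : ∀ ε > 0, x ≤ C * (a + ε) ^ (1 - θ) * (b + ε) ^ θ) :
    x ≤ C * a ^ (1 - θ) * b ^ θ := by
  have hcont : ContinuousAt (fun ε : ℝ => C * (a + ε) ^ (1 - θ) * (b + ε) ^ θ) 0 := by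
    refine (continuousAt_const.mul ?_).mul ?_
    · exact (Real.continuousAt_rpow_const _ _ (.inr (sub_nonneg.2 hθ1))).comp (by fun_prop)
    · exact (Real.continuousAt_rpow_const _ _ (.inr hθ0)).comp (by fun_prop)
  refine ge_of_tendsto (x := nhdsWithin 0 (Set.Ioi 0)) ?_ (eventually_nhdsWithin_of_forall h)
  simpa using hcont.tendsto.mono_left nhdsWithin_le_nhds

section Orthogonal

variable {𝕜 E M : Type*} [RCLike 𝕜] [NormedAddCommGroup E] [InnerProductSpace 𝕜 E]
  [AddCommGroup M] [Module 𝕜 M]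

theorem LinearMap.injective_domRestrict_orthogonal_ker (φ : E →ₗ[𝕜] M) :
    Function.Injective (φ.domRestrict (ker φ)ᗮ) := by
  refine (injective_iff_map_eq_zero _).2 fun x hx => ?_
  exact Subtype.ext <| (Submodule.inf_orthogonal_eq_bot (ker φ)).le ⟨hx, x.2⟩

theorem LinearMap.finiteDimensional_orthogonal_ker [FiniteDimensional 𝕜 M] (φ : E →ₗ[𝕜] M) :
    FiniteDimensional 𝕜 (ker φ)ᗮ :=
  Module.Finite.of_injective _ φ.injective_domRestrict_orthogonal_ker

theorem LinearMap.finrank_orthogonal_ker_le [FiniteDimensional 𝕜 M] (φ : E →ₗ[𝕜] M) :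
    finrank 𝕜 (ker φ)ᗮ ≤ finrank 𝕜 M :=
  LinearMap.finrank_le_finrank_of_injective φ.injective_domRestrict_orthogonal_ker

end Orthogonal

section ApproximationNumbers

variable {E F : Type*} [NormedAddCommGroup E] [NormedSpace ℂ E]
  [NormedAddCommGroup F] [NormedSpace ℂ F]

theorem approxNum_nonneg (T : E →L[ℂ] F) (n : ℕ) : 0 ≤ approxNum T n :=
  Real.sInf_nonneg fun _ ⟨_, _, hr⟩ => hr ▸ norm_nonneg _

theorem approxNum_le_norm_sub (T : E →L[ℂ] F) {n : ℕ} {G : E →L[ℂ] F}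
    (hG : Module.rank ℂ (range (G : E →ₗ[ℂ] F)) < n) : approxNum T n ≤ ‖T - G‖ :=
  csInf_le ⟨0, fun _ ⟨_, _, hr⟩ => hr ▸ norm_nonneg _⟩ ⟨G, hG, rfl⟩

theorem approxNum_le_norm (T : E →L[ℂ] F) {n : ℕ} (hn : 1 ≤ n) : approxNum T n ≤ ‖T‖ := by
  simpa using approxNum_le_norm_sub T (G := 0) (by simpa using Nat.succ_le_iff.mp hn)

theorem exists_norm_sub_lt_approxNum_add (T : E →L[ℂ] F) {n : ℕ} (hn : 1 ≤ n) {ε : ℝ}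
    (hε : 0 < ε) : ∃ G : E →L[ℂ] F, Module.rank ℂ (range (G : E →ₗ[ℂ] F)) < n ∧
      ‖T - G‖ < approxNum T n + ε := by
  obtain ⟨_, ⟨G, hG, rfl⟩, hlt⟩ := Real.lt_sInf_add_pos
    (s := {r | ∃ G : E →L[ℂ] F, Module.rank ℂ (range (G : E →ₗ[ℂ] F)) < n ∧ r = ‖T - G‖})
    ⟨‖T - 0‖, 0, by simpa using Nat.succ_le_iff.mp hn, rfl⟩ hε
  exact ⟨G, hG, hlt⟩

theorem approxNum_comp_le_weylNum (T : E →L[ℂ] F) {n : ℕ} (hn : 1 ≤ n)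
    {A : ellTwo →L[ℂ] E} (hA : ‖A‖ ≤ 1) : approxNum (T ∘L A) n ≤ weylNum T n := by
  refine le_csSup ⟨‖T‖, ?_⟩ ⟨A, hA, rfl⟩
  rintro _ ⟨B, hB, rfl⟩
  exact (approxNum_le_norm _ hn).trans <|
    (T.opNorm_comp_le B).trans (mul_le_of_le_one_right (norm_nonneg T) hB)

theorem weylNum_le_of_forall (T : E →L[ℂ] F) (n : ℕ) {b : ℝ}
    (hb : ∀ A : ellTwo →L[ℂ] E, ‖A‖ ≤ 1 → approxNum (T ∘L A) n ≤ b) : weylNum T n ≤ b :=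
  csSup_le ⟨_, 0, by simp, rfl⟩ fun _ ⟨A, hA, hr⟩ => hr ▸ hb A hA

end ApproximationNumbers

section HilbertDomain

variable {H F F₀ F₁ : Type*} [NormedAddCommGroup H] [InnerProductSpace ℂ H]
  [NormedAddCommGroup F] [NormedSpace ℂ F]
  [NormedAddCommGroup F₀] [NormedSpace ℂ F₀] [NormedAddCommGroup F₁] [NormedSpace ℂ F₁]

theorem approxNum_le_norm_comp_starProjection (S : H →L[ℂ] F) (K : Submodule ℂ H)
    [K.HasOrthogonalProjection] [FiniteDimensional ℂ Kᗮ] {n : ℕ} (hK : finrank ℂ Kᗮ < n) :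
    approxNum S n ≤ ‖S ∘L K.starProjection‖ := by
  have hsub : S - S ∘L Kᗮ.starProjection = S ∘L K.starProjection := by
    rw [K.starProjection_orthogonal, ContinuousLinearMap.comp_sub, ContinuousLinearMap.comp_id,
      sub_sub_cancel]
  refine hsub ▸ approxNum_le_norm_sub S ?_
  have hrange : range ((S ∘L Kᗮ.starProjection : H →L[ℂ] F) : H →ₗ[ℂ] F) =
      Kᗮ.map (S : H →ₗ[ℂ] F) := by
    rw [ContinuousLinearMap.toLinearMap_comp, range_comp, Kᗮ.range_starProjection]
  rw [hrange, ← finrank_eq_rank]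
  exact_mod_cast (Submodule.finrank_map_le _ _).trans_lt hK

theorem norm_comp_starProjection_le_norm_sub (S G : H →L[ℂ] F) {K : Submodule ℂ H}
    [K.HasOrthogonalProjection] (hK : K ≤ ker (G : H →ₗ[ℂ] F)) :
    ‖S ∘L K.starProjection‖ ≤ ‖S - G‖ := by
  have hGK : G ∘L K.starProjection = 0 := by
    ext x
    exact hK (K.starProjection_apply_mem x)
  calc ‖S ∘L K.starProjection‖ = ‖(S - G) ∘L K.starProjection‖ := by
        rw [ContinuousLinearMap.sub_comp, hGK, sub_zero]
    _ ≤ ‖S - G‖ * ‖K.starProjection‖ := (S - G).opNorm_comp_le _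
    _ ≤ ‖S - G‖ := mul_le_of_le_one_right (norm_nonneg _) K.starProjection_norm_le

theorem approxNum_add_sub_one_le_of_rank_lt [CompleteSpace H] {θ C : ℝ} (hθ0 : 0 ≤ θ)
    (hθ1 : θ ≤ 1) (hC : 0 ≤ C) {S : H →L[ℂ] F} {S₀ : H →L[ℂ] F₀} {S₁ : H →L[ℂ] F₁}
    (hS : ∀ x, ‖S x‖ ≤ C * ‖S₀ x‖ ^ (1 - θ) * ‖S₁ x‖ ^ θ) {n m : ℕ}
    {G₀ : H →L[ℂ] F₀} {G₁ : H →L[ℂ] F₁}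
    (hG₀ : Module.rank ℂ (range (G₀ : H →ₗ[ℂ] F₀)) < n)
    (hG₁ : Module.rank ℂ (range (G₁ : H →ₗ[ℂ] F₁)) < m) :
    approxNum S (n + m - 1) ≤ C * ‖S₀ - G₀‖ ^ (1 - θ) * ‖S₁ - G₁‖ ^ θ := by
  have : FiniteDimensional ℂ (range (G₀ : H →ₗ[ℂ] F₀)) :=
    Module.rank_lt_aleph0_iff.mp (hG₀.trans Cardinal.natCast_lt_aleph0)
  have : FiniteDimensional ℂ (range (G₁ : H →ₗ[ℂ] F₁)) :=
    Module.rank_lt_aleph0_iff.mp (hG₁.trans Cardinal.natCast_lt_aleph0)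
  set K := ker ((G₀.prod G₁ : H →L[ℂ] F₀ × F₁) : H →ₗ[ℂ] F₀ × F₁)
  -- `K` is also the kernel of a map into the finite-dimensional `range G₀ × range G₁`.
  have hK_ker :
      K = ker ((G₀ : H →ₗ[ℂ] F₀).rangeRestrict.prod (G₁ : H →ₗ[ℂ] F₁).rangeRestrict) := by
    simp [K, ker_prod]
  have hK_inf : K = ker (G₀ : H →ₗ[ℂ] F₀) ⊓ ker (G₁ : H →ₗ[ℂ] F₁) := by
    simp [K, ker_prod]
  have : FiniteDimensional ℂ Kᗮ := hK_ker ▸ finiteDimensional_orthogonal_ker _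
  have hrank : finrank ℂ Kᗮ < n + m - 1 := by
    have hle := hK_ker ▸ finrank_orthogonal_ker_le
      ((G₀ : H →ₗ[ℂ] F₀).rangeRestrict.prod (G₁ : H →ₗ[ℂ] F₁).rangeRestrict)
    rw [finrank_prod] at hle
    have h₀ := finrank_lt_of_rank_lt hG₀
    have h₁ := finrank_lt_of_rank_lt hG₁
    omega
  calc approxNum S (n + m - 1) ≤ ‖S ∘L K.starProjection‖ :=
        approxNum_le_norm_comp_starProjection S K hrank
    _ ≤ C * ‖S₀ ∘L K.starProjection‖ ^ (1 - θ) * ‖S₁ ∘L K.starProjection‖ ^ θ :=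
        ContinuousLinearMap.opNorm_le_mul_rpow_mul_rpow hθ0 hθ1 hC fun x => hS _
    _ ≤ C * ‖S₀ - G₀‖ ^ (1 - θ) * ‖S₁ - G₁‖ ^ θ := by
        gcongr
        · exact norm_comp_starProjection_le_norm_sub _ _ (hK_inf.le.trans inf_le_left)
        · exact norm_comp_starProjection_le_norm_sub _ _ (hK_inf.le.trans inf_le_right)

theorem approxNum_add_sub_one_le [CompleteSpace H] {θ C : ℝ} (hθ0 : 0 ≤ θ) (hθ1 : θ ≤ 1)
    (hC : 0 ≤ C) {S : H →L[ℂ] F} {S₀ : H →L[ℂ] F₀} {S₁ : H →L[ℂ] F₁}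
    (hS : ∀ x, ‖S x‖ ≤ C * ‖S₀ x‖ ^ (1 - θ) * ‖S₁ x‖ ^ θ) {n m : ℕ} (hn : 1 ≤ n) (hm : 1 ≤ m) :
    approxNum S (n + m - 1) ≤ C * approxNum S₀ n ^ (1 - θ) * approxNum S₁ m ^ θ := by
  refine le_mul_rpow_mul_rpow_of_forall_pos_s1 hθ0 hθ1 fun ε hε => ?_
  obtain ⟨G₀, hG₀, h₀⟩ := exists_norm_sub_lt_approxNum_add S₀ hn hε
  obtain ⟨G₁, hG₁, h₁⟩ := exists_norm_sub_lt_approxNum_add S₁ hm hε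
  calc approxNum S (n + m - 1) ≤ C * ‖S₀ - G₀‖ ^ (1 - θ) * ‖S₁ - G₁‖ ^ θ :=
        approxNum_add_sub_one_le_of_rank_lt hθ0 hθ1 hC hS hG₀ hG₁
    _ ≤ C * (approxNum S₀ n + ε) ^ (1 - θ) * (approxNum S₁ m + ε) ^ θ :=
        mul_rpow_mul_rpow_le_mul_rpow_mul_rpow hθ0 hθ1 hC (norm_nonneg _) (norm_nonneg _)
          h₀.le h₁.le

end HilbertDomain

theorem weyl_interpolation_general
    {X Y Y₀ Y₁ : Type*}
    [NormedAddCommGroup X] [NormedSpace ℂ X]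
    [NormedAddCommGroup Y] [NormedSpace ℂ Y]
    [NormedAddCommGroup Y₀] [NormedSpace ℂ Y₀]
    [NormedAddCommGroup Y₁] [NormedSpace ℂ Y₁]
    (θ C : ℝ) (hθ0 : 0 < θ) (hθ1 : θ < 1) (hC : 0 < C)
    (j₀ : Y₀ →ₗ[ℂ] Y) (j₁ : Y₁ →ₗ[ℂ] Y)
    (hint : ∀ (y₀ : Y₀) (y₁ : Y₁), j₀ y₀ = j₁ y₁ →
      ‖j₀ y₀‖ ≤ C * ‖y₀‖ ^ (1 - θ) * ‖y₁‖ ^ θ)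
    (T : X →L[ℂ] Y) (T₀ : X →L[ℂ] Y₀) (T₁ : X →L[ℂ] Y₁)
    (hT₀ : ∀ x, j₀ (T₀ x) = T x) (hT₁ : ∀ x, j₁ (T₁ x) = T x)
    (n m : ℕ) (hn : 1 ≤ n) (hm : 1 ≤ m) :
    weylNum T (n + m - 1) ≤
      C * weylNum T₀ n ^ (1 - θ) * weylNum T₁ m ^ θ := by
  have hT : ∀ x, ‖T x‖ ≤ C * ‖T₀ x‖ ^ (1 - θ) * ‖T₁ x‖ ^ θ := fun x => by
    simpa only [hT₀] using hint (T₀ x) (T₁ x) (by rw [hT₀, hT₁])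
  refine weylNum_le_of_forall T _ fun A hA => ?_
  calc approxNum (T ∘L A) (n + m - 1)
      ≤ C * approxNum (T₀ ∘L A) n ^ (1 - θ) * approxNum (T₁ ∘L A) m ^ θ :=
        approxNum_add_sub_one_le hθ0.le hθ1.le hC.le (fun y => hT (A y)) hn hm
    _ ≤ C * weylNum T₀ n ^ (1 - θ) * weylNum T₁ m ^ θ :=
        mul_rpow_mul_rpow_le_mul_rpow_mul_rpow hθ0.le hθ1.le hC.le (approxNum_nonneg _ _)
          (approxNum_nonneg _ _) (approxNum_comp_le_weylNum T₀ hn hA)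
          (approxNum_comp_le_weylNum T₁ hm hA)

/-- Interpolation property of Weyl numbers: if `T` maps `X` into `Y₀`, `Y₁` and `Y`,
where `Y₀ ∩ Y₁ ↪ Y` (realized via injections `j₀ : Y₀ → Y`, `j₁ : Y₁ → Y`) with
`‖y‖_Y ≤ C ‖y‖_{Y₀}^{1-θ} ‖y‖_{Y₁}^{θ}` for all `y ∈ Y₀ ∩ Y₁`, then
`x_{n+m-1}(T : X → Y) ≤ C · x_n(T : X → Y₀)^{1-θ} · x_m(T : X → Y₁)^{θ}`. -/
theorem weyl_interpolation
    {X Y Y₀ Y₁ : Type*}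
    [NormedAddCommGroup X] [NormedSpace ℂ X]
    [NormedAddCommGroup Y] [NormedSpace ℂ Y]
    [NormedAddCommGroup Y₀] [NormedSpace ℂ Y₀]
    [NormedAddCommGroup Y₁] [NormedSpace ℂ Y₁]
    (θ C : ℝ) (hθ0 : 0 < θ) (hθ1 : θ < 1) (hC : 0 < C)
    (j₀ : Y₀ →ₗ[ℂ] Y) (j₁ : Y₁ →ₗ[ℂ] Y)
    (hj₀ : Function.Injective j₀) (hj₁ : Function.Injective j₁)
    (hint : ∀ (y₀ : Y₀) (y₁ : Y₁), j₀ y₀ = j₁ y₁ →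
      ‖j₀ y₀‖ ≤ C * ‖y₀‖ ^ (1 - θ) * ‖y₁‖ ^ θ)
    (T : X →L[ℂ] Y) (T₀ : X →L[ℂ] Y₀) (T₁ : X →L[ℂ] Y₁)
    (hT₀ : ∀ x, j₀ (T₀ x) = T x) (hT₁ : ∀ x, j₁ (T₁ x) = T x)
    (n m : ℕ) (hn : 1 ≤ n) (hm : 1 ≤ m) :
    weylNum T (n + m - 1) ≤
      C * weylNum T₀ n ^ (1 - θ) * weylNum T₁ m ^ θ :=
  weyl_interpolation_general θ C hθ0 hθ1 hC j₀ j₁ hint T T₀ T₁ hT₀ hT₁ n m hn hm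
end
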